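/- (Remark after Theorem 1.) Let ρ and ρ' be two canonical two-qubit states, both positive semidefinite, which have the same parameters my, m'x, m'y, m'z and Cyy but possibly different parameters mx, mz, Cxx, Czz. Then for every α, z, u : ℝ for which the relevant post-selection traces are nonzero, the signaling differences coincide: P₊(Π(z,u)) − P₋(Π(z,u)) computed from ρ equals P₊(Π(z,u)) − P₋(Π(z,u)) computed from ρ'; i.e., the difference does not depend on mx, mz, Cxx, Czz. -/

import Mathlib

open Matrix Kronecker Complex
open scoped ComplexOrder

noncomputable section

/-- Pauli matrix `σx`. -/
def σx : Matrix (Fin 2) (Fin 2) ℂ := !![0, 1; 1, 0]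

/-- Pauli matrix `σy`. -/
def σy : Matrix (Fin 2) (Fin 2) ℂ := !![0, -Complex.I; Complex.I, 0]

/-- Pauli matrix `σz`. -/
def σz : Matrix (Fin 2) (Fin 2) ℂ := !![1, 0; 0, -1]

/-- The simulated PT-symmetric evolution operator at the chosen time. -/
def Upt (α : ℝ) : Matrix (Fin 2) (Fin 2) ℂ :=
  !![(Real.sin α : ℂ), -Complex.I; -Complex.I, -(Real.sin α : ℂ)]

/-- Alice's operation `A₊` (do nothing). -/
def Apos : Matrix (Fin 2) (Fin 2) ℂ := 1

/-- Alice's operation `A₋` (bit flip `σx`). -/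
def Aneg : Matrix (Fin 2) (Fin 2) ℂ := σx

/-- Unnormalized post-selected state after Alice applies `A₊` followed by the
simulated PT evolution. -/
def postPlus (α : ℝ) (ρ : Matrix (Fin 2 × Fin 2) (Fin 2 × Fin 2) ℂ) :
    Matrix (Fin 2 × Fin 2) (Fin 2 × Fin 2) ℂ :=
  ((Upt α * Apos) ⊗ₖ (1 : Matrix (Fin 2) (Fin 2) ℂ)) * ρ *
    ((Upt α * Apos) ⊗ₖ (1 : Matrix (Fin 2) (Fin 2) ℂ))ᴴ

/-- Unnormalized post-selected state after Alice applies `A₋` followed by the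
simulated PT evolution. -/
def postMinus (α : ℝ) (ρ : Matrix (Fin 2 × Fin 2) (Fin 2 × Fin 2) ℂ) :
    Matrix (Fin 2 × Fin 2) (Fin 2 × Fin 2) ℂ :=
  ((Upt α * Aneg) ⊗ₖ (1 : Matrix (Fin 2) (Fin 2) ℂ)) * ρ *
    ((Upt α * Aneg) ⊗ₖ (1 : Matrix (Fin 2) (Fin 2) ℂ))ᴴ

/-- Probability that Bob obtains outcome `Π` given Alice applied `A₊`. -/
def Pplus (α : ℝ) (ρ : Matrix (Fin 2 × Fin 2) (Fin 2 × Fin 2) ℂ)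
    (Pi : Matrix (Fin 2) (Fin 2) ℂ) : ℝ :=
  ((((1 : Matrix (Fin 2) (Fin 2) ℂ) ⊗ₖ Pi) * postPlus α ρ).trace).re /
    ((postPlus α ρ).trace).re

/-- Probability that Bob obtains outcome `Π` given Alice applied `A₋`. -/
def Pminus (α : ℝ) (ρ : Matrix (Fin 2 × Fin 2) (Fin 2 × Fin 2) ℂ)
    (Pi : Matrix (Fin 2) (Fin 2) ℂ) : ℝ :=
  ((((1 : Matrix (Fin 2) (Fin 2) ℂ) ⊗ₖ Pi) * postMinus α ρ).trace).re /
    ((postMinus α ρ).trace).re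

/-- Bob's `σy`-measurement projector onto `|+_y⟩ = (|0⟩ + i|1⟩)/√2`. -/
def Piy : Matrix (Fin 2) (Fin 2) ℂ :=
  (1/2 : ℂ) • !![1, -Complex.I; Complex.I, 1]

/-- Bob's rank-one projector `Π(z,u)` for an arbitrary projective measurement. -/
def Pizu (z u : ℝ) : Matrix (Fin 2) (Fin 2) ℂ :=
  !![((Real.cos (z/2))^2 : ℂ),
     (Real.cos (z/2) : ℂ) * (Real.sin (z/2) : ℂ) * Complex.exp (-(Complex.I * u));
     (Real.cos (z/2) : ℂ) * (Real.sin (z/2) : ℂ) * Complex.exp (Complex.I * u),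
     ((Real.sin (z/2))^2 : ℂ)]

/-- The single-qubit state `|+⟩ = (|0⟩ + |1⟩)/√2`. -/
def ketPlus : Fin 2 → ℂ := ![((1 / Real.sqrt 2 : ℝ) : ℂ), ((1 / Real.sqrt 2 : ℝ) : ℂ)]

/-- The single-qubit state `|−⟩ = (|0⟩ − |1⟩)/√2`. -/
def ketMinus : Fin 2 → ℂ := ![((1 / Real.sqrt 2 : ℝ) : ℂ), ((-(1 / Real.sqrt 2) : ℝ) : ℂ)]

/-- The (normalized) pure state `|ψ_{β,γ}⟩ = (β|++⟩ + γ|−−⟩)/√(β²+γ²)`. -/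
def ψpure (β γ : ℝ) : Fin 2 × Fin 2 → ℂ := fun q =>
  ((β : ℂ) * (ketPlus q.1 * ketPlus q.2) + (γ : ℂ) * (ketMinus q.1 * ketMinus q.2)) /
    ((Real.sqrt (β^2 + γ^2) : ℝ) : ℂ)

/-- The pure two-qubit density matrix `ρ_{β,γ} = |ψ_{β,γ}⟩⟨ψ_{β,γ}|`. -/
def ρpure (β γ : ℝ) : Matrix (Fin 2 × Fin 2) (Fin 2 × Fin 2) ℂ :=
  Matrix.vecMulVec (ψpure β γ) (fun q => starRingEnd ℂ (ψpure β γ q))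

/-- The maximally entangled state `|ψ⁺⟩ = (|00⟩ + |11⟩)/√2`. -/
def ψmax : Fin 2 × Fin 2 → ℂ := fun q =>
  if q.1 = q.2 then ((1 / Real.sqrt 2 : ℝ) : ℂ) else 0

/-- The two-qubit Werner state `ρ_W(p) = p |ψ⁺⟩⟨ψ⁺| + ((1-p)/4) 1`. -/
def ρWerner (p : ℝ) : Matrix (Fin 2 × Fin 2) (Fin 2 × Fin 2) ℂ :=
  (p : ℂ) • Matrix.vecMulVec ψmax (fun q => starRingEnd ℂ (ψmax q)) +
    (((1 - p) / 4 : ℝ) : ℂ) • 1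

/-- The canonical two-qubit state with magnetizations `mx my mz` (Alice),
`nx ny nz` (Bob) and diagonal correlators `Cxx Cyy Czz`. -/
def ρcan (mx my mz nx ny nz Cxx Cyy Czz : ℝ) :
    Matrix (Fin 2 × Fin 2) (Fin 2 × Fin 2) ℂ :=
  (1/4 : ℂ) • ((1 : Matrix (Fin 2 × Fin 2) (Fin 2 × Fin 2) ℂ)
    + (mx : ℂ) • (σx ⊗ₖ (1 : Matrix (Fin 2) (Fin 2) ℂ))
    + (my : ℂ) • (σy ⊗ₖ (1 : Matrix (Fin 2) (Fin 2) ℂ))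
    + (mz : ℂ) • (σz ⊗ₖ (1 : Matrix (Fin 2) (Fin 2) ℂ))
    + (nx : ℂ) • ((1 : Matrix (Fin 2) (Fin 2) ℂ) ⊗ₖ σx)
    + (ny : ℂ) • ((1 : Matrix (Fin 2) (Fin 2) ℂ) ⊗ₖ σy)
    + (nz : ℂ) • ((1 : Matrix (Fin 2) (Fin 2) ℂ) ⊗ₖ σz)
    + (Cxx : ℂ) • (σx ⊗ₖ σx)
    + (Cyy : ℂ) • (σy ⊗ₖ σy)
    + (Czz : ℂ) • (σz ⊗ₖ σz))

/-- The positive semidefinite square root, as `Matrix.PosSemidef.sqrt` was defined in the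
older Mathlib (removed since). -/
def Matrix.PosSemidef.sqrt {n 𝕜 : Type*} [Fintype n] [DecidableEq n] [RCLike 𝕜]
    {A : Matrix n n 𝕜} (hA : A.PosSemidef) : Matrix n n 𝕜 :=
  hA.1.eigenvectorUnitary.1 * diagonal ((↑) ∘ (√·) ∘ hA.1.eigenvalues) *
    (star hA.1.eigenvectorUnitary : Matrix n n 𝕜)

/-- Bob's reduced matrix: the partial trace over Alice's subsystem. -/
def ptraceA (X : Matrix (Fin 2 × Fin 2) (Fin 2 × Fin 2) ℂ) :
    Matrix (Fin 2) (Fin 2) ℂ :=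
  Matrix.of fun i j => ∑ k : Fin 2, X (k, i) (k, j)

/-- The trace distance `T(A,B) = (1/2) tr √((A-B)ᴴ (A-B))`, where the square
root is the positive semidefinite square root. -/
def traceDist (A B : Matrix (Fin 2) (Fin 2) ℂ) : ℝ :=
  (1/2) * (((Matrix.posSemidef_conjTranspose_mul_self (A - B)).sqrt).trace).re

/-!
Measuring `1 ⊗ Π` on `(V ⊗ 1) ρ (V ⊗ 1)ᴴ` is, by cyclicity of the trace, the functional
`ρ ↦ tr ((Vᴴ V ⊗ Π) ρ)`. For both of Alice's operations `V = U_α A±` one has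
`Vᴴ V = (1 + sin² α) 1 ± 2 sin α σy`, which lies in the span of `1` and `σy` and is
therefore trace-orthogonal to `σx` and `σz`. The parameters `mx, Cxx` and `mz, Czz` enter
the canonical state only through `σx ⊗ (mx 1 + Cxx σx)` and `σz ⊗ (mz 1 + Czz σz)`, so they
drop out of every numerator and denominator: `P₊` and `P₋` are each independent of them.
-/

namespace Matrix

variable {R l m n : Type*} [Fintype l] [Fintype m]

theorem trace_kronecker_mul_kronecker [CommSemiring R] (A C : Matrix l l R) (B D : Matrix m m R) :
    trace ((A ⊗ₖ B) * (C ⊗ₖ D)) = trace (A * C) * trace (B * D) := by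
  rw [← mul_kronecker_mul, trace_kronecker]

theorem trace_one_kronecker_mul_conj_kronecker_one [CommSemiring R] [StarRing R]
    [Fintype n] [DecidableEq m] [DecidableEq n] (V : Matrix n l R) (B : Matrix m m R)
    (ρ : Matrix (l × m) (l × m) R) :
    trace ((1 ⊗ₖ B) * ((V ⊗ₖ (1 : Matrix m m R)) * ρ * (V ⊗ₖ (1 : Matrix m m R))ᴴ)) =
      trace ((Vᴴ * V) ⊗ₖ B * ρ) := by
  rw [conjTranspose_kronecker, conjTranspose_one, ← Matrix.mul_assoc, trace_mul_comm,
    ← Matrix.mul_assoc, ← Matrix.mul_assoc, ← mul_kronecker_mul, ← mul_kronecker_mul,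
    Matrix.mul_one, Matrix.one_mul, Matrix.mul_one]

end Matrix

theorem ρcan_eq_add (mx my mz nx ny nz Cxx Cyy Czz : ℝ) :
    ρcan mx my mz nx ny nz Cxx Cyy Czz = ρcan 0 my 0 nx ny nz 0 Cyy 0 +
      (1/4 : ℂ) • (σx ⊗ₖ ((mx : ℂ) • 1 + (Cxx : ℂ) • σx) +
        σz ⊗ₖ ((mz : ℂ) • 1 + (Czz : ℂ) • σz)) := by
  simp only [ρcan, kronecker_add, kronecker_smul, Complex.ofReal_zero, zero_smul, add_zero]
  module

theorem trace_kronecker_mul_ρcan_eq (W B : Matrix (Fin 2) (Fin 2) ℂ)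
    (hx : trace (W * σx) = 0) (hz : trace (W * σz) = 0) (mx my mz nx ny nz Cxx Cyy Czz : ℝ) :
    trace (W ⊗ₖ B * ρcan mx my mz nx ny nz Cxx Cyy Czz) =
      trace (W ⊗ₖ B * ρcan 0 my 0 nx ny nz 0 Cyy 0) := by
  rw [ρcan_eq_add, Matrix.mul_add, trace_add, Matrix.mul_smul, trace_smul, Matrix.mul_add,
    trace_add, trace_kronecker_mul_kronecker, trace_kronecker_mul_kronecker, hx, hz]
  simp

theorem Upt_conjTranspose_mul_self (α : ℝ) :
    (Upt α)ᴴ * Upt α =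
      ((1 + Real.sin α ^ 2 : ℝ) : ℂ) • 1 + ((2 * Real.sin α : ℝ) : ℂ) • σy := by
  ext i j
  fin_cases i <;> fin_cases j <;>
    simp [Upt, σy, mul_apply, Fin.sum_univ_two, -Complex.ofReal_sin] <;> ring

theorem Upt_mul_σx_conjTranspose_mul_self (α : ℝ) :
    (Upt α * σx)ᴴ * (Upt α * σx) =
      ((1 + Real.sin α ^ 2 : ℝ) : ℂ) • 1 + ((-(2 * Real.sin α) : ℝ) : ℂ) • σy := by
  ext i j
  fin_cases i <;> fin_cases j <;>
    simp [Upt, σx, σy, mul_apply, Fin.sum_univ_two, -Complex.ofReal_sin] <;> ring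

def postSelectProb (V B : Matrix (Fin 2) (Fin 2) ℂ)
    (ρ : Matrix (Fin 2 × Fin 2) (Fin 2 × Fin 2) ℂ) : ℝ :=
  (trace ((1 ⊗ₖ B) * ((V ⊗ₖ (1 : Matrix (Fin 2) (Fin 2) ℂ)) * ρ * (V ⊗ₖ 1)ᴴ))).re /
    (trace ((V ⊗ₖ (1 : Matrix (Fin 2) (Fin 2) ℂ)) * ρ * (V ⊗ₖ 1)ᴴ)).re

theorem postSelectProb_ρcan_eq (V B : Matrix (Fin 2) (Fin 2) ℂ) {a b : ℂ}
    (hV : Vᴴ * V = a • 1 + b • σy) (mx my mz nx ny nz Cxx Cyy Czz : ℝ) :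
    postSelectProb V B (ρcan mx my mz nx ny nz Cxx Cyy Czz) =
      postSelectProb V B (ρcan 0 my 0 nx ny nz 0 Cyy 0) := by
  have hx : trace (Vᴴ * V * σx) = 0 := by
    simp [hV, σx, σy, trace_fin_two, mul_apply, Fin.sum_univ_two]
  have hz : trace (Vᴴ * V * σz) = 0 := by
    simp [hV, σz, σy, trace_fin_two, mul_apply, Fin.sum_univ_two]
  have hden (ρ : Matrix (Fin 2 × Fin 2) (Fin 2 × Fin 2) ℂ) :
      trace ((V ⊗ₖ (1 : Matrix (Fin 2) (Fin 2) ℂ)) * ρ * (V ⊗ₖ 1)ᴴ) =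
        trace ((Vᴴ * V) ⊗ₖ 1 * ρ) := by
    rw [← trace_one_kronecker_mul_conj_kronecker_one, one_kronecker_one, Matrix.one_mul]
  rw [postSelectProb, postSelectProb, hden, hden, trace_one_kronecker_mul_conj_kronecker_one,
    trace_one_kronecker_mul_conj_kronecker_one, trace_kronecker_mul_ρcan_eq _ B hx hz,
    trace_kronecker_mul_ρcan_eq _ 1 hx hz]

theorem Pplus_ρcan_eq (α : ℝ) (B : Matrix (Fin 2) (Fin 2) ℂ)
    (mx my mz nx ny nz Cxx Cyy Czz : ℝ) :
    Pplus α (ρcan mx my mz nx ny nz Cxx Cyy Czz) B =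
      Pplus α (ρcan 0 my 0 nx ny nz 0 Cyy 0) B :=
  postSelectProb_ρcan_eq _ B (by rw [Apos, Matrix.mul_one, Upt_conjTranspose_mul_self]) ..

theorem Pminus_ρcan_eq (α : ℝ) (B : Matrix (Fin 2) (Fin 2) ℂ)
    (mx my mz nx ny nz Cxx Cyy Czz : ℝ) :
    Pminus α (ρcan mx my mz nx ny nz Cxx Cyy Czz) B =
      Pminus α (ρcan 0 my 0 nx ny nz 0 Cyy 0) B :=
  postSelectProb_ρcan_eq _ B (Upt_mul_σx_conjTranspose_mul_self α) ..

theorem stmt10_general (mx my mz nx ny nz Cxx Cyy Czz mx' mz' Cxx' Czz' : ℝ)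
    (ρ ρ' : Matrix (Fin 2 × Fin 2) (Fin 2 × Fin 2) ℂ)
    (hρ : ρ = ρcan mx my mz nx ny nz Cxx Cyy Czz)
    (hρ' : ρ' = ρcan mx' my mz' nx ny nz Cxx' Cyy Czz') :
    ∀ α z u : ℝ,
      ((postPlus α ρ).trace).re ≠ 0 →
      ((postMinus α ρ).trace).re ≠ 0 →
      ((postPlus α ρ').trace).re ≠ 0 →
      ((postMinus α ρ').trace).re ≠ 0 →
      Pplus α ρ (Pizu z u) - Pminus α ρ (Pizu z u) =
        Pplus α ρ' (Pizu z u) - Pminus α ρ' (Pizu z u) := by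
  intro α z u _ _ _ _
  rw [hρ, hρ', Pplus_ρcan_eq, Pminus_ρcan_eq, Pplus_ρcan_eq α _ mx', Pminus_ρcan_eq α _ mx']

/-- Remark after Theorem 1: the signaling difference does not depend on the
parameters `mx`, `mz`, `Cxx`, `Czz` of the canonical two-qubit state. -/
theorem stmt10 (mx my mz nx ny nz Cxx Cyy Czz mx' mz' Cxx' Czz' : ℝ)
    (ρ ρ' : Matrix (Fin 2 × Fin 2) (Fin 2 × Fin 2) ℂ)
    (hρ : ρ = ρcan mx my mz nx ny nz Cxx Cyy Czz)
    (hρ' : ρ' = ρcan mx' my mz' nx ny nz Cxx' Cyy Czz')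
    (hpsd : ρ.PosSemidef) (hpsd' : ρ'.PosSemidef) :
    ∀ α z u : ℝ,
      ((postPlus α ρ).trace).re ≠ 0 →
      ((postMinus α ρ).trace).re ≠ 0 →
      ((postPlus α ρ').trace).re ≠ 0 →
      ((postMinus α ρ').trace).re ≠ 0 →
      Pplus α ρ (Pizu z u) - Pminus α ρ (Pizu z u) =
        Pplus α ρ' (Pizu z u) - Pminus α ρ' (Pizu z u) :=
  stmt10_general mx my mz nx ny nz Cxx Cyy Czz mx' mz' Cxx' Czz' ρ ρ' hρ hρ'
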